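/- Let 2/3 < ν < 4/5 and let ν₋, ν₊ satisfy: ν₋, ν₊ > 0; 3ν/2 − 1 < ν₋ < ν/2; 0 < ν₊ < 1 − ν; ν₋ + ν₊ = 1 − ν. With g_a(ζ) := sinh((ζ − iπa)/2) / sinh((ζ + iπa)/2), define S_CDD(ζ) := g_{ν−ν₋}(ζ) · g_{ν+ν₊}(ζ) · g_{1−ν+ν₋}(ζ) · g_{1−ν−ν₊}(ζ). Then the value S_CDD(iπν) is a (nonzero) real number and S_CDD(iπν) < 0. -/
import Mathlib


open Complex

/-- The elementary factor g_a(ζ) = sinh((ζ − iπa)/2)/sinh((ζ + iπa)/2). -/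
noncomputable def gfac (a : ℝ) (ζ : ℂ) : ℂ :=
  Complex.sinh ((ζ - Complex.I * (Real.pi : ℂ) * (a : ℂ)) / 2) /
  Complex.sinh ((ζ + Complex.I * (Real.pi : ℂ) * (a : ℂ)) / 2)

/-- The CDD factor S_CDD = g_{ν−ν₋} g_{ν+ν₊} g_{1−ν+ν₋} g_{1−ν−ν₊}. -/
noncomputable def SCDD (ν νm νp : ℝ) (ζ : ℂ) : ℂ :=
  gfac (ν - νm) ζ * gfac (ν + νp) ζ * gfac (1 - ν + νm) ζ * gfac (1 - ν - νp) ζ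

lemma gval (a ν : ℝ) :
    gfac a (Complex.I * (Real.pi : ℂ) * (ν : ℂ)) =
      ((Real.sin (Real.pi * (ν - a) / 2) / Real.sin (Real.pi * (ν + a) / 2) : ℝ) : ℂ) := by
  unfold gfac
  have h1 : (Complex.I * (Real.pi : ℂ) * (ν : ℂ) - Complex.I * (Real.pi : ℂ) * (a : ℂ)) / 2
      = ((Real.pi * (ν - a) / 2 : ℝ) : ℂ) * Complex.I := by push_cast; ring
  have h2 : (Complex.I * (Real.pi : ℂ) * (ν : ℂ) + Complex.I * (Real.pi : ℂ) * (a : ℂ)) / 2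
      = ((Real.pi * (ν + a) / 2 : ℝ) : ℂ) * Complex.I := by push_cast; ring
  rw [h1, h2, Complex.sinh_mul_I, Complex.sinh_mul_I,
    mul_div_mul_right _ _ Complex.I_ne_zero]
  norm_cast

lemma sin_half_pos {x : ℝ} (h0 : 0 < x) (h2 : x < 2) : 0 < Real.sin (Real.pi * x / 2) := by
  apply Real.sin_pos_of_pos_of_lt_pi
  · positivity
  · nlinarith [Real.pi_pos]

/-- under the stated conditions on ν, ν₋, ν₊, the value S_CDD(iπν)
is a negative real number. -/
theorem SCDD_value_at_pole_negative (ν : ℝ) (h1 : 2/3 < ν) (h2 : ν < 4/5)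
    (νm νp : ℝ) (hm : 0 < νm) (hp : 0 < νp)
    (hm1 : 3*ν/2 - 1 < νm) (hm2 : νm < ν/2)
    (hp1 : νp < 1 - ν) (hsum : νm + νp = 1 - ν) :
    ∃ r : ℝ, SCDD ν νm νp (Complex.I * (Real.pi : ℂ) * (ν : ℂ)) = (r : ℂ) ∧ r < 0 := by
  set r1 : ℝ := Real.sin (Real.pi * (ν - (ν - νm)) / 2) / Real.sin (Real.pi * (ν + (ν - νm)) / 2)
  set r2 : ℝ := Real.sin (Real.pi * (ν - (ν + νp)) / 2) / Real.sin (Real.pi * (ν + (ν + νp)) / 2)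
  set r3 : ℝ := Real.sin (Real.pi * (ν - (1 - ν + νm)) / 2) / Real.sin (Real.pi * (ν + (1 - ν + νm)) / 2)
  set r4 : ℝ := Real.sin (Real.pi * (ν - (1 - ν - νp)) / 2) / Real.sin (Real.pi * (ν + (1 - ν - νp)) / 2)
  refine ⟨r1 * r2 * r3 * r4, ?_, ?_⟩
  · unfold SCDD
    rw [gval, gval, gval, gval]
    norm_cast
  · have hr1 : 0 < r1 := by
      apply div_pos
      · apply sin_half_pos <;> nlinarith
      · apply sin_half_pos <;> nlinarith
    have hr3 : 0 < r3 := by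
      apply div_pos
      · apply sin_half_pos <;> nlinarith
      · apply sin_half_pos <;> nlinarith
    have hr4 : 0 < r4 := by
      apply div_pos
      · apply sin_half_pos <;> nlinarith
      · apply sin_half_pos <;> nlinarith
    have hr2 : r2 < 0 := by
      apply div_neg_of_neg_of_pos
      · have : Real.pi * (ν - (ν + νp)) / 2 = -(Real.pi * νp / 2) := by ring
        rw [this, Real.sin_neg]
        exact neg_neg_of_pos (sin_half_pos hp (by nlinarith))
      · apply sin_half_pos <;> nlinarith
    nlinarith [mul_pos hr1 hr3, mul_pos (mul_pos hr1 hr3) hr4]
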